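/- Let G(x) = (1/2)e^{-|x|} and let α ∈ (0,1). Define for each positive integer N the weight J_N(x) = e^{αN} for x < -N, J_N(x) = e^{-αx} for -N ≤ x ≤ 0, and J_N(x) = 1 for x > 0. Then there exists a constant C₀ > 0, independent of N, such that J_N(x)·|(∂ₓG ∗ J_N^{-1})(x)| ≤ C₀ for all x ∈ ℝ. -/

import Mathlib

/-!
Writing `J α N x = exp (α * φ x)` with `φ x = min N (max (-x) 0)`, which is `1`-Lipschitz, gives
`J α N x ≤ exp (α |x - y|) J α N y`. Hence the weighted integrand is bounded by
`½ exp (-(1 - α) |x - y|)`, whose integral `1 / (1 - α)` does not depend on `N`.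
-/

open MeasureTheory Real

/-- The weight function `J_N`. -/
noncomputable def J (α : ℝ) (N : ℕ) (x : ℝ) : ℝ :=
  if x < -(N : ℝ) then Real.exp (α * N)
  else if x ≤ 0 then Real.exp (-α * x)
  else 1

/-- The derivative `∂ₓG` of the Green's function `G x = exp (-|x|) / 2` of `1 - ∂ₓ²`. -/
noncomputable def greenDeriv (z : ℝ) : ℝ := -(1 / 2) * sign z * exp (-|z|)

lemma abs_sign_le_one (r : ℝ) : |sign r| ≤ 1 := by
  rcases sign_apply_eq r with h | h | h <;> simp [h]

lemma abs_greenDeriv_le (z : ℝ) : |greenDeriv z| ≤ 1 / 2 * exp (-|z|) := by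
  rw [greenDeriv, abs_mul, abs_mul, abs_of_pos (exp_pos _), abs_neg, abs_of_pos one_half_pos]
  gcongr
  exact mul_le_of_le_one_right one_half_pos.le (abs_sign_le_one z)

lemma integrable_exp_neg_mul_abs {c : ℝ} (hc : 0 < c) :
    Integrable fun x : ℝ => exp (-c * |x|) := by
  have := (integrable_fun_norm_addHaar (volume : Measure ℝ) (f := fun r => exp (-c * r))).2
  simpa using this (by simpa using exp_neg_integrableOn_Ioi 0 hc)

lemma integral_exp_neg_mul_abs {c : ℝ} (hc : 0 < c) :
    ∫ x : ℝ, exp (-c * |x|) = 2 / c := by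
  rw [integral_comp_abs (f := fun r => exp (-c * r)), integral_exp_mul_Ioi (neg_lt_zero.2 hc)]
  field_simp
  simp

theorem abs_integral_div_weight_le {w k : ℝ → ℝ} {α M x : ℝ} (hα : α < 1)
    (hw : ∀ y, 0 < w y) (hwx : ∀ y, w x ≤ exp (α * |x - y|) * w y)
    (hk : ∀ z, |k z| ≤ M * exp (-|z|)) :
    w x * |∫ y, k (x - y) / w y| ≤ 2 * M / (1 - α) := by
  have hc : 0 < 1 - α := sub_pos.2 hα
  have hpt : ∀ y, ‖w x * (k (x - y) / w y)‖ ≤ M * exp (-(1 - α) * |x - y|) := fun y => by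
    rw [norm_mul, norm_div, Real.norm_of_nonneg (hw x).le, Real.norm_of_nonneg (hw y).le,
      Real.norm_eq_abs]
    calc w x * (|k (x - y)| / w y)
        ≤ exp (α * |x - y|) * w y * (|k (x - y)| / w y) :=
          mul_le_mul_of_nonneg_right (hwx y) (div_nonneg (abs_nonneg _) (hw y).le)
      _ = exp (α * |x - y|) * |k (x - y)| := by field_simp [(hw y).ne']
      _ ≤ exp (α * |x - y|) * (M * exp (-|x - y|)) := by gcongr; exact hk _
      _ = M * exp (-(1 - α) * |x - y|) := by rw [mul_left_comm, ← exp_add]; ring_nf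
  have hint : Integrable fun y => M * exp (-(1 - α) * |x - y|) :=
    ((integrable_exp_neg_mul_abs hc).comp_sub_left x).const_mul M
  calc w x * |∫ y, k (x - y) / w y| = ‖∫ y, w x * (k (x - y) / w y)‖ := by
        rw [integral_const_mul, norm_mul, Real.norm_of_nonneg (hw x).le, Real.norm_eq_abs]
    _ ≤ ∫ y, M * exp (-(1 - α) * |x - y|) := norm_integral_le_of_norm_le hint (.of_forall hpt)
    _ = 2 * M / (1 - α) := by
        rw [integral_const_mul, integral_sub_left_eq_self (fun z => exp (-(1 - α) * |z|)),
          integral_exp_neg_mul_abs hc]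
        ring

lemma J_eq_exp (α : ℝ) (N : ℕ) (x : ℝ) :
    J α N x = exp (α * min (N : ℝ) (max (-x) 0)) := by
  unfold J
  split_ifs with h₁ h₂
  · rw [min_eq_left (le_max_of_le_left (by linarith))]
  · rw [max_eq_left (by linarith), min_eq_right (by linarith), neg_mul_comm]
  · rw [max_eq_right (by linarith), min_eq_right N.cast_nonneg, mul_zero, exp_zero]

lemma J_pos (α : ℝ) (N : ℕ) (x : ℝ) : 0 < J α N x := by
  rw [J_eq_exp]; exact exp_pos _

lemma J_le_exp_mul_abs_sub_mul_J {α : ℝ} (hα : 0 ≤ α) (N : ℕ) (x y : ℝ) :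
    J α N x ≤ exp (α * |x - y|) * J α N y := by
  have h : min (N : ℝ) (max (-x) 0) - min (N : ℝ) (max (-y) 0) ≤ |x - y| :=
    calc _ ≤ |min (N : ℝ) (max (-x) 0) - min (N : ℝ) (max (-y) 0)| := le_abs_self _
      _ ≤ max |(N : ℝ) - N| |max (-x) 0 - max (-y) 0| := abs_min_sub_min_le_max ..
      _ ≤ |x - y| := by
        rw [sub_self, abs_zero]
        refine max_le (abs_nonneg _) ?_
        simpa [neg_add_eq_sub, abs_sub_comm] using abs_max_sub_max_le_abs (-x) (-y) 0
  rw [J_eq_exp, J_eq_exp, ← exp_add, exp_le_exp]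
  nlinarith

/-- `J_N(x) |(∂ₓG ∗ J_N⁻¹)(x)| ≤ C₀` uniformly in `N` and `x`, where
`∂ₓG(x) = -(1/2) sgn(x) e^{-|x|}`. -/
theorem JN_weighted_conv_deriv_bound (α : ℝ) (hα : α ∈ Set.Ioo (0:ℝ) 1) :
    ∃ C₀ > (0:ℝ), ∀ N : ℕ, 0 < N → ∀ x : ℝ,
      J α N x * |∫ y : ℝ, (-(1/2)) * Real.sign (x - y) * Real.exp (-|x - y|) / J α N y| ≤ C₀ := by
  obtain ⟨hα₀, hα₁⟩ := hα
  refine ⟨1 / (1 - α), one_div_pos.2 (sub_pos.2 hα₁), fun N _ x => ?_⟩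
  calc _ ≤ 2 * (1 / 2) / (1 - α) :=
        abs_integral_div_weight_le (k := greenDeriv) hα₁ (J_pos α N)
          (J_le_exp_mul_abs_sub_mul_J hα₀.le N x) abs_greenDeriv_le
    _ = 1 / (1 - α) := by ring
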